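/- arXiv:2201.09457 — 5 statements merged into one kernel-verified Lean document; each statement's English description precedes it below -/
import Mathlib

section
/- Let A be a nonempty finite set, let q : A → ℝ, let π₀ and π be strictly positive probability distributions on A, and let η > 0, τ ≥ 0. Suppose π⁺ is a minimizer over probability distributions p on A of η·(Σ_a q(a)p(a) + τ·KL(p‖π₀)) + KL(p‖π). Then π⁺ is strictly positive, and for every probability distribution p on A: η·Σ_a q(a)(π⁺(a) − p(a)) + η·τ·(KL(π⁺‖π₀) − KL(p‖π₀)) + KL(π⁺‖π) ≤ KL(p‖π) − (τ·η + 1)·KL(p‖π⁺). -/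
/-- A probability distribution on a finite set: nonnegative and sums to 1. -/
def IsDist {A : Type*} [Fintype A] (p : A → ℝ) : Prop :=
  (∀ a, 0 ≤ p a) ∧ ∑ a, p a = 1

/-- Kullback–Leibler divergence on a finite set (with the convention 0·log 0 = 0,
which holds since `Real.log 0 = 0` and `0 * x = 0`). -/
noncomputable def KL {A : Type*} [Fintype A] (p q : A → ℝ) : ℝ :=
  ∑ a, p a * Real.log (p a / q a)

lemma gibbs_le {x y : ℝ} (hx : 0 ≤ x) (hy : 0 < y) :
    x - y ≤ x * Real.log (x / y) := by
  rcases eq_or_lt_of_le hx with h | h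
  · rw [← h]; simp; linarith
  · have h1 : Real.log (y / x) ≤ y / x - 1 := Real.log_le_sub_one_of_pos (by positivity)
    have h2 : Real.log (x / y) = -Real.log (y / x) := by
      rw [← Real.log_inv]; congr 1; rw [inv_div]
    have h3 : x * (y / x - 1) = y - x := by field_simp
    have h4 : x * Real.log (y / x) ≤ y - x := by
      calc x * Real.log (y / x) ≤ x * (y / x - 1) :=
            mul_le_mul_of_nonneg_left h1 (le_of_lt h)
        _ = y - x := h3
    rw [h2, mul_neg]; linarith

lemma gibbs_eq {x y : ℝ} (hx : 0 ≤ x) (hy : 0 < y)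
    (h : x * Real.log (x / y) = x - y) : x = y := by
  rcases eq_or_lt_of_le hx with h0 | h0
  · exfalso; rw [← h0] at h; simp at h; linarith
  · by_contra hne
    have ht : y / x ≠ 1 := by
      intro h1
      apply hne
      have : y = x := by field_simp at h1; linarith
      linarith
    have h1 : Real.log (y / x) < y / x - 1 :=
      Real.log_lt_sub_one_of_pos (by positivity) ht
    have h2 : Real.log (x / y) = -Real.log (y / x) := by
      rw [← Real.log_inv]; congr 1; rw [inv_div]
    have h3 : x * (y / x - 1) = y - x := by field_simp
    have h4 : x * Real.log (y / x) < y - x := by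
      calc x * Real.log (y / x) < x * (y / x - 1) := by
            exact mul_lt_mul_of_pos_left h1 h0
        _ = y - x := h3
    rw [h2, mul_neg] at h
    linarith

/-- the three-point lemma for the HPMD update (Lemma 1). -/
theorem stmt0 {A : Type*} [Fintype A] [Nonempty A]
    (q π0 π πp : A → ℝ)
    (hπ0 : IsDist π0) (hπ0pos : ∀ a, 0 < π0 a)
    (hπ : IsDist π) (hπpos : ∀ a, 0 < π a)
    (η τ : ℝ) (hη : 0 < η) (hτ : 0 ≤ τ)
    (hπpdist : IsDist πp)
    (hmin : ∀ p : A → ℝ, IsDist p →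
      η * ((∑ a, q a * πp a) + τ * KL πp π0) + KL πp π ≤
      η * ((∑ a, q a * p a) + τ * KL p π0) + KL p π) :
    (∀ a, 0 < πp a) ∧
    ∀ p : A → ℝ, IsDist p →
      η * (∑ a, q a * (πp a - p a)) + η * τ * (KL πp π0 - KL p π0) + KL πp π ≤
      KL p π - (τ * η + 1) * KL p πp := by
  set c : ℝ := τ * η + 1 with hc
  have hcpos : 0 < c := by nlinarith
  have hc0 : c ≠ 0 := ne_of_gt hcpos
  set L : A → ℝ := fun a => η * q a - η * τ * Real.log (π0 a) - Real.log (π a) with hL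
  set Z : ℝ := ∑ a, Real.exp (-(L a) / c) with hZ
  have hZpos : 0 < Z := Finset.sum_pos (fun a _ => Real.exp_pos _) Finset.univ_nonempty
  set r : A → ℝ := fun a => Real.exp (-(L a) / c) / Z with hr
  have hrpos : ∀ a, 0 < r a := fun a => div_pos (Real.exp_pos _) hZpos
  have hrdist : IsDist r := by
    refine ⟨fun a => (hrpos a).le, ?_⟩
    simp only [hr]
    rw [← Finset.sum_div, ← hZ, div_self (ne_of_gt hZpos)]
  have hlogr : ∀ a, Real.log (r a) = -(L a) / c - Real.log Z := by
    intro a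
    simp only [hr]
    rw [Real.log_div (ne_of_gt (Real.exp_pos _)) (ne_of_gt hZpos), Real.log_exp]
  -- key identity: the objective equals c * KL p r - c * log Z
  have key : ∀ p : A → ℝ, IsDist p →
      c * KL p r = η * ((∑ a, q a * p a) + τ * KL p π0) + KL p π + c * Real.log Z := by
    intro p hp
    have hpt : ∀ a, c * (p a * Real.log (p a / r a)) =
        η * (q a * p a) + η * τ * (p a * Real.log (p a / π0 a)) +
        p a * Real.log (p a / π a) + (c * Real.log Z) * p a := by
      intro a
      by_cases hpa : p a = 0
      · simp [hpa]
      · rw [Real.log_div hpa (ne_of_gt (hrpos a)),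
            Real.log_div hpa (ne_of_gt (hπ0pos a)),
            Real.log_div hpa (ne_of_gt (hπpos a)), hlogr a]
        simp only [hL]
        field_simp
        ring
    calc c * KL p r = ∑ a, c * (p a * Real.log (p a / r a)) := by
          rw [KL, Finset.mul_sum]
      _ = ∑ a, (η * (q a * p a) + η * τ * (p a * Real.log (p a / π0 a)) +
            p a * Real.log (p a / π a) + (c * Real.log Z) * p a) :=
          Finset.sum_congr rfl fun a _ => hpt a
      _ = η * (∑ a, q a * p a) + η * τ * (∑ a, p a * Real.log (p a / π0 a)) +
            (∑ a, p a * Real.log (p a / π a)) + (c * Real.log Z) * (∑ a, p a) := by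
          rw [Finset.sum_add_distrib, Finset.sum_add_distrib, Finset.sum_add_distrib,
            ← Finset.mul_sum, ← Finset.mul_sum, ← Finset.mul_sum]
      _ = η * ((∑ a, q a * p a) + τ * KL p π0) + KL p π + c * Real.log Z := by
          rw [KL, KL, hp.2]; ring
  have hKLrr : KL r r = 0 := by
    rw [KL]
    exact Finset.sum_eq_zero fun a _ => by
      rw [div_self (ne_of_gt (hrpos a)), Real.log_one, mul_zero]
  -- the minimizer property forces KL πp r ≤ 0
  have hKLr_le : KL πp r ≤ 0 := by
    have h := hmin r hrdist
    have h1 := key πp hπpdist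
    have h2 := key r hrdist
    rw [hKLrr, mul_zero] at h2
    have h3 : c * KL πp r ≤ c * 0 := by linarith
    exact le_of_mul_le_mul_left h3 hcpos
  have hgibbs : ∀ a, πp a - r a ≤ πp a * Real.log (πp a / r a) :=
    fun a => gibbs_le (hπpdist.1 a) (hrpos a)
  have hsum0 : ∑ a, (πp a * Real.log (πp a / r a) - (πp a - r a)) = KL πp r := by
    rw [Finset.sum_sub_distrib, Finset.sum_sub_distrib, hπpdist.2, hrdist.2, KL]
    ring
  have hKLnn : 0 ≤ KL πp r := by
    rw [← hsum0]
    exact Finset.sum_nonneg fun a _ => by linarith [hgibbs a]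
  have hKLπpr : KL πp r = 0 := le_antisymm hKLr_le hKLnn
  have heach : ∀ a ∈ Finset.univ (α := A),
      πp a * Real.log (πp a / r a) - (πp a - r a) = 0 := by
    apply (Finset.sum_eq_zero_iff_of_nonneg (fun a _ => by linarith [hgibbs a])).mp
    rw [hsum0, hKLπpr]
  have hpe : ∀ a, πp a = r a := fun a =>
    gibbs_eq (hπpdist.1 a) (hrpos a) (by linarith [heach a (Finset.mem_univ a)])
  have hπppos : ∀ a, 0 < πp a := fun a => (hpe a) ▸ hrpos a
  refine ⟨hπppos, fun p hp => ?_⟩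
  have hKLpr : KL p πp = KL p r := by
    rw [KL, KL]
    exact Finset.sum_congr rfl fun a _ => by rw [hpe a]
  have h1 := key πp hπpdist
  have h2 := key p hp
  have hsplit : ∑ a, q a * (πp a - p a) =
      (∑ a, q a * πp a) - ∑ a, q a * p a := by
    rw [← Finset.sum_sub_distrib]
    exact Finset.sum_congr rfl fun a _ => by ring
  rw [hsplit]
  have goal_eq : η * ((∑ a, q a * πp a) - ∑ a, q a * p a) +
      η * τ * (KL πp π0 - KL p π0) + KL πp π = KL p π - c * KL p πp := by
    linear_combination -h1 + h2 + c * hKLpr + c * hKLπpr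
  linarith
end

section
/- For any two policies π, π' and any state s ∈ S: V^{π'}(s) − V^{π}(s) = (1/(1−γ)) · Σ_{s'∈S} d_s^{π'}(s') · Σ_{a∈A} Q^{π}(s',a)·(π'(a|s') − π(a|s')). -/
/-- A (randomized, stationary) policy: a probability distribution over actions for each state. -/
def IsPolicy {S A : Type*} [Fintype A] (π : S → A → ℝ) : Prop :=
  ∀ s, IsDist (π s)

/-- the performance difference lemma (Lemma 2). -/
theorem stmt1 {S A : Type*} [Fintype S] [Nonempty S] [Fintype A] [Nonempty A] [DecidableEq S]
    (γ : ℝ) (hγ : 0 < γ ∧ γ < 1)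
    (c : S → A → ℝ) (P : S → A → S → ℝ) (hP : ∀ s a, IsDist (P s a))
    (π π' : S → A → ℝ) (hπ : IsPolicy π) (hπ' : IsPolicy π')
    (V V' : S → ℝ)
    (hV : ∀ s, V s = ∑ a, π s a * (c s a + γ * ∑ s', P s a s' * V s'))
    (hV' : ∀ s, V' s = ∑ a, π' s a * (c s a + γ * ∑ s', P s a s' * V' s'))
    -- discounted state-visitation distributions of π'
    (d : S → S → ℝ) (hd1 : ∀ s, IsDist (d s))
    (hd : ∀ s s', d s s' = (1 - γ) * (if s' = s then 1 else 0) +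
        γ * ∑ s'', d s s'' * ∑ a, π' s'' a * P s'' a s')
    (s : S) :
    V' s - V s = (1 / (1 - γ)) * ∑ s', d s s' *
      ∑ a, (c s' a + γ * ∑ t, P s' a t * V t) * (π' s' a - π s' a) := by
  have hγ1 : (1 - γ) ≠ 0 := by nlinarith [hγ.2]
  set Δ : S → ℝ := fun t => V' t - V t with hΔ
  set g : S → ℝ := fun s' => ∑ a, (c s' a + γ * ∑ t, P s' a t * V t) * (π' s' a - π s' a)
    with hg
  -- one-step expansion of the value difference
  have key : ∀ s', Δ s' = g s' + γ * ∑ t, (∑ a, π' s' a * P s' a t) * Δ t := by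
    intro s'
    have hswap : ∑ t, (∑ a, π' s' a * P s' a t) * Δ t
        = ∑ a, π' s' a * ∑ t, P s' a t * Δ t := by
      simp_rw [Finset.sum_mul, Finset.mul_sum]
      rw [Finset.sum_comm]
      apply Finset.sum_congr rfl; intro a _
      apply Finset.sum_congr rfl; intro t _
      ring
    have hsplit : ∀ a, ∑ t, P s' a t * V' t
        = (∑ t, P s' a t * V t) + (∑ t, P s' a t * Δ t) := by
      intro a
      rw [← Finset.sum_add_distrib]
      apply Finset.sum_congr rfl
      intro t _
      simp only [hΔ]; ring
    have : Δ s' = (∑ a, π' s' a * (c s' a + γ * ∑ t, P s' a t * V' t))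
        - ∑ a, π s' a * (c s' a + γ * ∑ t, P s' a t * V t) := by
      simp only [hΔ, ← hV, ← hV']
    rw [this, hswap, hg, Finset.mul_sum, ← Finset.sum_add_distrib,
      ← Finset.sum_sub_distrib]
    apply Finset.sum_congr rfl
    intro a _
    rw [hsplit a]
    ring
  -- multiply the recursion for d by Δ and sum
  have hDd : ∀ t, γ * ∑ s'', d s s'' * ∑ a, π' s'' a * P s'' a t
      = d s t - (1 - γ) * (if t = s then 1 else 0) := by
    intro t
    have := hd s t
    linarith
  have main : ∑ s', d s s' * Δ s'
      = ∑ s', d s s' * g s' + ∑ t, (d s t - (1 - γ) * (if t = s then 1 else 0)) * Δ t := by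
    calc ∑ s', d s s' * Δ s'
        = ∑ s', (d s s' * g s'
            + γ * (d s s' * ∑ t, (∑ a, π' s' a * P s' a t) * Δ t)) := by
          apply Finset.sum_congr rfl
          intro s' _
          rw [key s']; ring
      _ = ∑ s', d s s' * g s'
            + ∑ t, (γ * ∑ s'', d s s'' * ∑ a, π' s'' a * P s'' a t) * Δ t := by
          rw [Finset.sum_add_distrib]
          congr 1
          simp_rw [Finset.mul_sum, Finset.sum_mul]
          rw [Finset.sum_comm]
          apply Finset.sum_congr rfl; intro s' _
          apply Finset.sum_congr rfl; intro t _
          simp only [Finset.mul_sum]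
          apply Finset.sum_congr rfl
          intro i _
          ring
      _ = ∑ s', d s s' * g s' + ∑ t, (d s t - (1 - γ) * (if t = s then 1 else 0)) * Δ t := by
          congr 1
          apply Finset.sum_congr rfl; intro t _
          rw [hDd t]
  have hsplit2 : ∑ t, (d s t - (1 - γ) * (if t = s then 1 else 0)) * Δ t
      = (∑ t, d s t * Δ t) - (1 - γ) * Δ s := by
    have h1 : ∑ t, (d s t - (1 - γ) * (if t = s then 1 else 0)) * Δ t
        = ∑ t, (d s t * Δ t - (1 - γ) * (if t = s then 1 else 0) * Δ t) := by
      apply Finset.sum_congr rfl; intro t _; ring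
    rw [h1, Finset.sum_sub_distrib]
    congr 1
    rw [Finset.sum_eq_single s]
    · simp
    · intro b _ hb; simp [hb]
    · intro h; exact absurd (Finset.mem_univ s) h
  have hfin : (1 - γ) * Δ s = ∑ s', d s s' * g s' := by
    rw [hsplit2] at main
    linarith
  have : Δ s = (1 / (1 - γ)) * ∑ s', d s s' * g s' := by
    field_simp
    linarith
  simpa [hΔ, hg] using this
end

section
/- Suppose (α_k)_{k≥0} are positive reals satisfying α_k ≥ α_{k+1}·γ and α_k·(1/η_k + τ_k) ≥ α_{k+1}/η_{k+1} for all k. Then for every k ≥ 0 the HPMD iterates satisfy: α_k·(f(π_{k+1}) − f(π*)) + α_k·(1/η_k + τ_k)·φ(π_{k+1}, π*) ≤ α_0·γ·(f(π_0) − f(π*)) + (α_0/η_0)·φ(π_0, π*) + Σ_{t=0}^{k} (3·α_t·τ_t/(1−γ))·log|A|, where φ(π, π*) = Σ_s ν*(s)·KL(π*(·|s)‖π(·|s)). -/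
/-- The Q-function induced by a value function `V`. -/
noncomputable def Qf {S A : Type*} [Fintype S] (γ : ℝ) (c : S → A → ℝ)
    (P : S → A → S → ℝ) (V : S → ℝ) (s : S) (a : A) : ℝ :=
  c s a + γ * ∑ s', P s a s' * V s'

lemma sub_le_mul_log_div {p q : ℝ} (hp : 0 ≤ p) (hq : 0 < q) :
    p - q ≤ p * Real.log (p / q) := by
  rcases eq_or_lt_of_le hp with h | h
  · simp [← h]; linarith
  · have h1 : Real.log (q / p) ≤ q / p - 1 := Real.log_le_sub_one_of_pos (by positivity)
    have h2 : Real.log (p / q) = - Real.log (q / p) := by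
      rw [← Real.log_inv]; congr 1; field_simp
    have h3 : p * (q / p - 1) = q - p := by field_simp
    nlinarith [mul_le_mul_of_nonneg_left h1 hp]

lemma sub_lt_mul_log_div {p q : ℝ} (hp : 0 ≤ p) (hq : 0 < q) (hne : p ≠ q) :
    p - q < p * Real.log (p / q) := by
  rcases eq_or_lt_of_le hp with h | h
  · simp [← h]; linarith
  · have h1 : Real.log (q / p) < q / p - 1 := by
      apply Real.log_lt_sub_one_of_pos (by positivity)
      intro hc
      apply hne
      field_simp at hc
      linarith
    have h2 : Real.log (p / q) = - Real.log (q / p) := by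
      rw [← Real.log_inv]; congr 1; field_simp
    have h3 : p * (q / p - 1) = q - p := by field_simp
    nlinarith [mul_lt_mul_of_pos_left h1 h]

lemma KL_nonneg {A : Type*} [Fintype A] {p q : A → ℝ} (hp : IsDist p) (hq : IsDist q)
    (hqpos : ∀ a, 0 < q a) : 0 ≤ KL p q := by
  have h : ∑ a, (p a - q a) ≤ ∑ a, p a * Real.log (p a / q a) :=
    Finset.sum_le_sum fun a _ => sub_le_mul_log_div (hp.1 a) (hqpos a)
  rw [Finset.sum_sub_distrib, hp.2, hq.2] at h
  simpa [KL] using h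

lemma KL_eq_zero {A : Type*} [Fintype A] {p q : A → ℝ} (hp : IsDist p) (hq : IsDist q)
    (hqpos : ∀ a, 0 < q a) (h0 : KL p q ≤ 0) : p = q := by
  by_contra hne
  have ⟨a0, ha0⟩ : ∃ a, p a ≠ q a := by
    by_contra hc; push_neg at hc; exact hne (funext hc)
  have h : ∑ a, (p a - q a) < ∑ a, p a * Real.log (p a / q a) := by
    apply Finset.sum_lt_sum
    · exact fun a _ => sub_le_mul_log_div (hp.1 a) (hqpos a)
    · exact ⟨a0, Finset.mem_univ a0, sub_lt_mul_log_div (hp.1 a0) (hqpos a0) ha0⟩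
  rw [Finset.sum_sub_distrib, hp.2, hq.2] at h
  have : (0:ℝ) < KL p q := by simpa [KL] using h
  linarith

lemma KL_expand {A : Type*} [Fintype A] {p q : A → ℝ} (hp : ∀ a, 0 ≤ p a)
    (hqpos : ∀ a, 0 < q a) :
    KL p q = (∑ a, p a * Real.log (p a)) - ∑ a, p a * Real.log (q a) := by
  rw [KL, ← Finset.sum_sub_distrib]
  apply Finset.sum_congr rfl
  intro a _
  rcases eq_or_lt_of_le (hp a) with h | h
  · simp [← h]
  · rw [Real.log_div (ne_of_gt h) (ne_of_gt (hqpos a))]; ring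

lemma KL_self {A : Type*} [Fintype A] (q : A → ℝ) : KL q q = 0 := by
  rw [KL]
  apply Finset.sum_eq_zero
  intro a _
  rcases eq_or_ne (q a) 0 with h | h
  · simp [h]
  · rw [div_self h, Real.log_one, mul_zero]

lemma wsum2 {S : Type*} [Fintype S] (w X Y : S → ℝ) (c1 c2 : ℝ) :
    ∑ s, w s * (c1 * X s + c2 * Y s)
      = c1 * ∑ s, w s * X s + c2 * ∑ s, w s * Y s := by
  rw [Finset.mul_sum, Finset.mul_sum, ← Finset.sum_add_distrib]
  exact Finset.sum_congr rfl fun s _ => by ring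

lemma wsum3 {S : Type*} [Fintype S] (w X Y Z : S → ℝ) (c1 c2 c3 : ℝ) :
    ∑ s, w s * (c1 * X s + c2 * Y s + c3 * Z s)
      = c1 * ∑ s, w s * X s + c2 * ∑ s, w s * Y s + c3 * ∑ s, w s * Z s := by
  rw [Finset.mul_sum, Finset.mul_sum, Finset.mul_sum, ← Finset.sum_add_distrib,
    ← Finset.sum_add_distrib]
  exact Finset.sum_congr rfl fun s _ => by ring

lemma prox_step {A : Type*} [Fintype A] [Nonempty A]
    (Q π0 πk π1 : A → ℝ) (η τ : ℝ) (hη : 0 < η) (hτ : 0 ≤ τ)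
    (h0pos : ∀ a, 0 < π0 a)
    (hk : IsDist πk) (hkpos : ∀ a, 0 < πk a)
    (h1 : IsDist π1)
    (hmin : ∀ p : A → ℝ, IsDist p →
      η * ((∑ a, Q a * π1 a) + τ * KL π1 π0) + KL π1 πk ≤
      η * ((∑ a, Q a * p a) + τ * KL p π0) + KL p πk) :
    (∀ a, 0 < π1 a) ∧
    (∀ p : A → ℝ, IsDist p →
      η * ((∑ a, Q a * π1 a) + τ * KL π1 π0) + KL π1 πk + (1 + η * τ) * KL p π1 ≤
      η * ((∑ a, Q a * p a) + τ * KL p π0) + KL p πk) := by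
  have hc : (0:ℝ) < 1 + η * τ := by nlinarith
  set x : A → ℝ := fun a =>
    (η * τ * Real.log (π0 a) + Real.log (πk a) - η * Q a) / (1 + η * τ) with hx
  set Z : ℝ := ∑ a, Real.exp (x a) with hZ
  have hZpos : 0 < Z := Finset.sum_pos (fun a _ => Real.exp_pos _) Finset.univ_nonempty
  set q : A → ℝ := fun a => Real.exp (x a) / Z with hq
  have hqpos : ∀ a, 0 < q a := fun a => div_pos (Real.exp_pos _) hZpos
  have hqdist : IsDist q := by
    constructor
    · exact fun a => (hqpos a).le
    · rw [hq]
      rw [← Finset.sum_div, ← hZ, div_self (ne_of_gt hZpos)]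
  have hlogq : ∀ a, Real.log (q a) = x a - Real.log Z := by
    intro a
    rw [hq]
    rw [Real.log_div (ne_of_gt (Real.exp_pos _)) (ne_of_gt hZpos), Real.log_exp]
  -- key identity
  have key : ∀ p : A → ℝ, IsDist p →
      η * ((∑ a, Q a * p a) + τ * KL p π0) + KL p πk
        = (1 + η * τ) * KL p q - (1 + η * τ) * Real.log Z := by
    intro p hp
    have e0 := KL_expand hp.1 h0pos
    have ek := KL_expand hp.1 hkpos
    have eq1 : KL p q = (∑ a, p a * Real.log (p a)) - ((∑ a, p a * x a) - Real.log Z) := by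
      rw [KL_expand hp.1 hqpos]
      congr 1
      simp_rw [hlogq, mul_sub, Finset.sum_sub_distrib, ← Finset.sum_mul, hp.2, one_mul]
    have hsx : (1 + η * τ) * (∑ a, p a * x a)
        = η * τ * (∑ a, p a * Real.log (π0 a)) + (∑ a, p a * Real.log (πk a))
          - η * (∑ a, Q a * p a) := by
      rw [Finset.mul_sum, Finset.mul_sum, Finset.mul_sum,
        ← Finset.sum_add_distrib, ← Finset.sum_sub_distrib]
      apply Finset.sum_congr rfl
      intro a _
      rw [hx]
      field_simp
    rw [e0, ek, eq1]
    linear_combination hsx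
  -- π1 = q
  have hKL1q : KL π1 q ≤ 0 := by
    have h := hmin q hqdist
    rw [key π1 h1, key q hqdist, KL_self] at h
    nlinarith
  have hπ1q : π1 = q := KL_eq_zero h1 hqdist hqpos hKL1q
  constructor
  · intro a; rw [hπ1q]; exact hqpos a
  · intro p hp
    rw [key p hp, key π1 h1, hπ1q, KL_self]
    linarith

/-- the generic recursion for HPMD (Lemma 3). -/
theorem stmt3 {S A : Type*} [Fintype S] [Nonempty S] [Fintype A] [Nonempty A]
    (γ : ℝ) (hγ : 0 < γ ∧ γ < 1)
    (c : S → A → ℝ) (P : S → A → S → ℝ) (hP : ∀ s a, IsDist (P s a))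
    (V : (S → A → ℝ) → S → ℝ)
    (hV : ∀ π, IsPolicy π → ∀ s, V π s = ∑ a, π s a * Qf γ c P (V π) s a)
    -- an optimal policy π*
    (πstar : S → A → ℝ) (hπstar : IsPolicy πstar)
    (hoptimal : ∀ π', IsPolicy π' → ∀ s, V πstar s ≤ V π' s)
    -- its stationary state distribution ν*, with full support
    (ν : S → ℝ) (hν : IsDist ν) (hνpos : ∀ s, 0 < ν s)
    (hνstat : ∀ s', ν s' = ∑ s, ν s * ∑ a, πstar s a * P s a s')
    -- HPMD iterates
    (η τ : ℕ → ℝ) (hη : ∀ k, 0 < η k) (hτ : ∀ k, 0 ≤ τ k)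
    (π : ℕ → S → A → ℝ) (hpol : ∀ k, IsPolicy (π k))
    (hinit : ∀ s a, π 0 s a = 1 / (Fintype.card A : ℝ))
    (hstep : ∀ k s, ∀ p : A → ℝ, IsDist p →
      η k * ((∑ a, Qf γ c P (V (π k)) s a * π (k+1) s a) + τ k * KL (π (k+1) s) (π 0 s))
          + KL (π (k+1) s) (π k s) ≤
      η k * ((∑ a, Qf γ c P (V (π k)) s a * p a) + τ k * KL p (π 0 s)) + KL p (π k s))
    -- the weights α_k
    (α : ℕ → ℝ) (hαpos : ∀ k, 0 < α k)
    (hα1 : ∀ k, α (k+1) * γ ≤ α k)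
    (hα2 : ∀ k, α (k+1) / η (k+1) ≤ α k * (1 / η k + τ k)) :
    ∀ k : ℕ,
      α k * ((∑ s, ν s * V (π (k+1)) s) - ∑ s, ν s * V πstar s)
        + α k * (1 / η k + τ k) * (∑ s, ν s * KL (πstar s) (π (k+1) s)) ≤
      α 0 * γ * ((∑ s, ν s * V (π 0) s) - ∑ s, ν s * V πstar s)
        + (α 0 / η 0) * (∑ s, ν s * KL (πstar s) (π 0 s))
        + ∑ t ∈ Finset.range (k+1),
            3 * α t * τ t / (1 - γ) * Real.log (Fintype.card A : ℝ) := by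
  obtain ⟨hγ0, hγ1⟩ := hγ
  have h1γ : (0:ℝ) < 1 - γ := by linarith
  have hcardpos : (0:ℝ) < (Fintype.card A : ℝ) := by exact_mod_cast Fintype.card_pos
  set L := Real.log (Fintype.card A : ℝ) with hLdef
  have hL : 0 ≤ L := Real.log_nonneg (by exact_mod_cast Fintype.card_pos)
  have h0pos : ∀ s (a : A), 0 < π 0 s a := by
    intro s a; rw [hinit]; exact div_pos one_pos hcardpos
  -- positivity of all iterates
  have hpos : ∀ k s (a : A), 0 < π k s a := by
    intro k
    induction k with
    | zero => exact h0pos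
    | succ n ih =>
      intro s
      exact (prox_step (fun a => Qf γ c P (V (π n)) s a) (π 0 s) (π n s) (π (n+1) s)
        (η n) (τ n) (hη n) (hτ n) (h0pos s)
        (hpol n s) (ih s) (hpol (n+1) s) (fun p hp => hstep n s p hp)).1
  -- the three-point inequality
  have h3pt : ∀ k s, ∀ p : A → ℝ, IsDist p →
      η k * ((∑ a, Qf γ c P (V (π k)) s a * π (k+1) s a) + τ k * KL (π (k+1) s) (π 0 s))
        + KL (π (k+1) s) (π k s) + (1 + η k * τ k) * KL p (π (k+1) s) ≤
      η k * ((∑ a, Qf γ c P (V (π k)) s a * p a) + τ k * KL p (π 0 s)) + KL p (π k s) := by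
    intro k s
    exact (prox_step (fun a => Qf γ c P (V (π k)) s a) (π 0 s) (π k s) (π (k+1) s)
      (η k) (τ k) (hη k) (hτ k) (h0pos s)
      (hpol k s) (hpos k s) (hpol (k+1) s) (fun p hp => hstep k s p hp)).2
  -- KL to the uniform distribution is between 0 and L
  have hKL0 : ∀ k s (p : A → ℝ), IsDist p → 0 ≤ KL p (π k s) :=
    fun k s p hp => KL_nonneg hp (hpol k s) (hpos k s)
  have hKLu_le : ∀ s (p : A → ℝ), IsDist p → KL p (π 0 s) ≤ L := by
    intro s p hp
    rw [KL_expand hp.1 (h0pos s)]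
    have e : ∑ a, p a * Real.log (π 0 s a) = -L := by
      simp_rw [hinit]
      rw [← Finset.sum_mul, hp.2, one_mul, one_div, Real.log_inv, hLdef]
    rw [e]
    have hneg : ∑ a, p a * Real.log (p a) ≤ 0 := by
      apply Finset.sum_nonpos
      intro a _
      apply mul_nonpos_of_nonneg_of_nonpos (hp.1 a)
      apply Real.log_nonpos (hp.1 a)
      rw [← hp.2]
      exact Finset.single_le_sum (fun i _ => hp.1 i) (Finset.mem_univ a)
    linarith
  -- performance difference identity
  have hPD : ∀ (ρ : S → A → ℝ), IsPolicy ρ → ∀ (πb : S → A → ℝ) (s : S),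
      V ρ s - V πb s = ((∑ a, Qf γ c P (V πb) s a * ρ s a) - V πb s)
        + γ * ∑ a, ρ s a * ∑ s', P s a s' * (V ρ s' - V πb s') := by
    intro ρ hρ πb s
    have h1 : V ρ s = ∑ a, ρ s a * Qf γ c P (V ρ) s a := hV ρ hρ s
    have h2 : ∑ a, ρ s a * Qf γ c P (V ρ) s a
        = (∑ a, Qf γ c P (V πb) s a * ρ s a)
          + γ * ∑ a, ρ s a * ∑ s', P s a s' * (V ρ s' - V πb s') := by
      rw [Finset.mul_sum, ← Finset.sum_add_distrib]
      apply Finset.sum_congr rfl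
      intro a _
      have e : ∑ s', P s a s' * (V ρ s' - V πb s')
          = (∑ s', P s a s' * V ρ s') - ∑ s', P s a s' * V πb s' := by
        rw [← Finset.sum_sub_distrib]
        exact Finset.sum_congr rfl fun s' _ => by ring
      simp only [Qf]
      rw [e]
      ring
    rw [h1, h2]
    ring
  -- convex combination bound
  have hcomb : ∀ (ρ : S → A → ℝ), IsPolicy ρ → ∀ (D : S → ℝ) (m : ℝ),
      (∀ s', D s' ≤ m) → ∀ s, ∑ a, ρ s a * ∑ s', P s a s' * D s' ≤ m := by
    intro ρ hρ D m hm s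
    have inner : ∀ a, ∑ s', P s a s' * D s' ≤ m := by
      intro a
      calc ∑ s', P s a s' * D s' ≤ ∑ s', P s a s' * m :=
            Finset.sum_le_sum fun s' _ => mul_le_mul_of_nonneg_left (hm s') ((hP s a).1 s')
        _ = m := by rw [← Finset.sum_mul, (hP s a).2, one_mul]
    calc ∑ a, ρ s a * ∑ s', P s a s' * D s' ≤ ∑ a, ρ s a * m :=
          Finset.sum_le_sum fun a _ => mul_le_mul_of_nonneg_left (inner a) ((hρ s).1 a)
      _ = m := by rw [← Finset.sum_mul, (hρ s).2, one_mul]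
  -- descent property
  have hD : ∀ k s, (∑ a, Qf γ c P (V (π k)) s a * π (k+1) s a) ≤ V (π k) s + τ k * L := by
    intro k s
    have h := hstep k s (π k s) (hpol k s)
    rw [KL_self] at h
    have hVk : (∑ a, Qf γ c P (V (π k)) s a * π k s a) = V (π k) s := by
      rw [hV (π k) (hpol k) s]
      exact Finset.sum_congr rfl fun a _ => mul_comm _ _
    rw [hVk] at h
    have b1 : 0 ≤ KL (π (k+1) s) (π k s) := hKL0 k s _ (hpol (k+1) s)
    have m1 : 0 ≤ η k * (τ k * KL (π (k+1) s) (π 0 s)) :=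
      mul_nonneg (hη k).le (mul_nonneg (hτ k) (hKL0 0 s _ (hpol (k+1) s)))
    have m2 : η k * (τ k * KL (π k s) (π 0 s)) ≤ η k * (τ k * L) :=
      mul_le_mul_of_nonneg_left
        (mul_le_mul_of_nonneg_left (hKLu_le s _ (hpol k s)) (hτ k)) (hη k).le
    have hmul : η k * (∑ a, Qf γ c P (V (π k)) s a * π (k+1) s a)
        ≤ η k * (V (π k) s + τ k * L) := by nlinarith [h, m1, m2, b1]
    exact le_of_mul_le_mul_left hmul (hη k)
  -- bound on value increase
  have hB1 : ∀ k s, V (π (k+1)) s - V (π k) s ≤ τ k * L / (1 - γ) := by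
    intro k
    obtain ⟨s0, hs0⟩ := Finite.exists_max (fun s => V (π (k+1)) s - V (π k) s)
    have hrec := hPD (π (k+1)) (hpol (k+1)) (π k) s0
    have hw : ∑ a, π (k+1) s0 a * ∑ s', P s0 a s' * (V (π (k+1)) s' - V (π k) s')
        ≤ V (π (k+1)) s0 - V (π k) s0 :=
      hcomb (π (k+1)) (hpol (k+1)) _ _ hs0 s0
    have hγw : γ * (∑ a, π (k+1) s0 a * ∑ s', P s0 a s' * (V (π (k+1)) s' - V (π k) s'))
        ≤ γ * (V (π (k+1)) s0 - V (π k) s0) := mul_le_mul_of_nonneg_left hw hγ0.le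
    have hg := hD k s0
    have hmax : V (π (k+1)) s0 - V (π k) s0 ≤ τ k * L / (1 - γ) := by
      rw [le_div_iff₀ h1γ]
      nlinarith [hrec, hg, hγw]
    intro s
    exact le_trans (hs0 s) hmax
  -- stationarity swap
  have hswap : ∀ D : S → ℝ,
      ∑ s, ν s * ∑ a, πstar s a * ∑ s', P s a s' * D s' = ∑ s', ν s' * D s' := by
    intro D
    calc ∑ s, ν s * ∑ a, πstar s a * ∑ s', P s a s' * D s'
        = ∑ s, ∑ a, ∑ s', ν s * (πstar s a * (P s a s' * D s')) := by
          simp_rw [Finset.mul_sum]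
      _ = ∑ s, ∑ s', ∑ a, ν s * (πstar s a * (P s a s' * D s')) :=
          Finset.sum_congr rfl fun s _ => Finset.sum_comm
      _ = ∑ s', ∑ s, ∑ a, ν s * (πstar s a * (P s a s' * D s')) := Finset.sum_comm
      _ = ∑ s', (∑ s, ν s * ∑ a, πstar s a * P s a s') * D s' := by
          apply Finset.sum_congr rfl
          intro s' _
          rw [Finset.sum_mul]
          apply Finset.sum_congr rfl
          intro s _
          rw [Finset.mul_sum, Finset.sum_mul]
          exact Finset.sum_congr rfl fun a _ => by ring
      _ = ∑ s', ν s' * D s' := by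
          exact Finset.sum_congr rfl fun s' _ => by rw [← hνstat s']
  -- stationary-average performance difference for πstar
  have hstat : ∀ k,
      (∑ s, ν s * (∑ a, Qf γ c P (V (π k)) s a * πstar s a))
        = (1 - γ) * ((∑ s, ν s * V πstar s) - ∑ s, ν s * V (π k) s)
          + ∑ s, ν s * V (π k) s := by
    intro k
    have e1 : ∑ s, ν s * (V πstar s - V (π k) s)
        = (∑ s, ν s * ((∑ a, Qf γ c P (V (π k)) s a * πstar s a) - V (π k) s))
          + γ * ∑ s, ν s * (∑ a, πstar s a * ∑ s', P s a s' * (V πstar s' - V (π k) s')) := by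
      calc ∑ s, ν s * (V πstar s - V (π k) s)
          = ∑ s, (ν s * ((∑ a, Qf γ c P (V (π k)) s a * πstar s a) - V (π k) s)
              + γ * (ν s * (∑ a, πstar s a * ∑ s', P s a s' * (V πstar s' - V (π k) s')))) := by
            apply Finset.sum_congr rfl
            intro s _
            rw [hPD πstar hπstar (π k) s]
            ring
        _ = _ := by rw [Finset.sum_add_distrib, ← Finset.mul_sum]
    rw [hswap (fun s' => V πstar s' - V (π k) s')] at e1
    have e2 : ∑ s, ν s * (V πstar s - V (π k) s)
        = (∑ s, ν s * V πstar s) - ∑ s, ν s * V (π k) s := by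
      rw [← Finset.sum_sub_distrib]
      exact Finset.sum_congr rfl fun s _ => by ring
    have e3 : ∑ s, ν s * ((∑ a, Qf γ c P (V (π k)) s a * πstar s a) - V (π k) s)
        = (∑ s, ν s * (∑ a, Qf γ c P (V (π k)) s a * πstar s a)) - ∑ s, ν s * V (π k) s := by
      rw [← Finset.sum_sub_distrib]
      exact Finset.sum_congr rfl fun s _ => by ring
    rw [e2, e3] at e1
    linarith
  -- lower bound on the average of Q against the new policy
  have hR2 : ∀ k,
      (∑ s, ν s * V (π (k+1)) s) - γ * (τ k * L / (1 - γ))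
        ≤ ∑ s, ν s * (∑ a, Qf γ c P (V (π k)) s a * π (k+1) s a) := by
    intro k
    have per : ∀ s, ν s * ((V (π (k+1)) s - V (π k) s) - γ * (τ k * L / (1 - γ)))
        ≤ ν s * ((∑ a, Qf γ c P (V (π k)) s a * π (k+1) s a) - V (π k) s) := by
      intro s
      apply mul_le_mul_of_nonneg_left _ (hνpos s).le
      have hrec := hPD (π (k+1)) (hpol (k+1)) (π k) s
      have hw : ∑ a, π (k+1) s a * ∑ s', P s a s' * (V (π (k+1)) s' - V (π k) s')
          ≤ τ k * L / (1 - γ) :=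
        hcomb (π (k+1)) (hpol (k+1)) _ _ (hB1 k) s
      have hγw := mul_le_mul_of_nonneg_left hw hγ0.le
      linarith
    have hsum := Finset.sum_le_sum (fun s (_ : s ∈ Finset.univ) => per s)
    have eL : ∑ s, ν s * ((V (π (k+1)) s - V (π k) s) - γ * (τ k * L / (1 - γ)))
        = ((∑ s, ν s * V (π (k+1)) s) - ∑ s, ν s * V (π k) s)
          - γ * (τ k * L / (1 - γ)) := by
      calc ∑ s, ν s * ((V (π (k+1)) s - V (π k) s) - γ * (τ k * L / (1 - γ)))
          = ∑ s, (ν s * V (π (k+1)) s - ν s * V (π k) s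
              - (γ * (τ k * L / (1 - γ))) * ν s) := by
            exact Finset.sum_congr rfl fun s _ => by ring
        _ = (∑ s, ν s * V (π (k+1)) s) - (∑ s, ν s * V (π k) s)
              - (γ * (τ k * L / (1 - γ))) * ∑ s, ν s := by
            rw [Finset.sum_sub_distrib, Finset.sum_sub_distrib, ← Finset.mul_sum]
        _ = _ := by rw [hν.2, mul_one]
    have eR : ∑ s, ν s * ((∑ a, Qf γ c P (V (π k)) s a * π (k+1) s a) - V (π k) s)
        = (∑ s, ν s * (∑ a, Qf γ c P (V (π k)) s a * π (k+1) s a))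
          - ∑ s, ν s * V (π k) s := by
      rw [← Finset.sum_sub_distrib]
      exact Finset.sum_congr rfl fun s _ => by ring
    rw [eL, eR] at hsum
    linarith
  -- averaged three-point inequality
  have hI : ∀ k,
      η k * (∑ s, ν s * (∑ a, Qf γ c P (V (π k)) s a * π (k+1) s a))
        + (1 + η k * τ k) * (∑ s, ν s * KL (πstar s) (π (k+1) s))
      ≤ η k * (∑ s, ν s * (∑ a, Qf γ c P (V (π k)) s a * πstar s a))
        + η k * τ k * L + ∑ s, ν s * KL (πstar s) (π k s) := by
    intro k
    have per : ∀ s,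
        ν s * (η k * (∑ a, Qf γ c P (V (π k)) s a * π (k+1) s a)
          + (1 + η k * τ k) * KL (πstar s) (π (k+1) s))
        ≤ ν s * (η k * (∑ a, Qf γ c P (V (π k)) s a * πstar s a)
          + η k * τ k * L + KL (πstar s) (π k s)) := by
      intro s
      apply mul_le_mul_of_nonneg_left _ (hνpos s).le
      have h3 := h3pt k s (πstar s) (hπstar s)
      have b1 : 0 ≤ KL (π (k+1) s) (π k s) := hKL0 k s _ (hpol (k+1) s)
      have m1 : 0 ≤ η k * (τ k * KL (π (k+1) s) (π 0 s)) :=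
        mul_nonneg (hη k).le (mul_nonneg (hτ k) (hKL0 0 s _ (hpol (k+1) s)))
      have m2 : η k * (τ k * KL (πstar s) (π 0 s)) ≤ η k * (τ k * L) :=
        mul_le_mul_of_nonneg_left
          (mul_le_mul_of_nonneg_left (hKLu_le s _ (hπstar s)) (hτ k)) (hη k).le
      linarith
    have hsum := Finset.sum_le_sum (fun s (_ : s ∈ Finset.univ) => per s)
    have eL : ∑ s, ν s * (η k * (∑ a, Qf γ c P (V (π k)) s a * π (k+1) s a)
          + (1 + η k * τ k) * KL (πstar s) (π (k+1) s))
        = η k * (∑ s, ν s * (∑ a, Qf γ c P (V (π k)) s a * π (k+1) s a))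
          + (1 + η k * τ k) * (∑ s, ν s * KL (πstar s) (π (k+1) s)) := by
      rw [Finset.mul_sum, Finset.mul_sum, ← Finset.sum_add_distrib]
      exact Finset.sum_congr rfl fun s _ => by ring
    have eR : ∑ s, ν s * (η k * (∑ a, Qf γ c P (V (π k)) s a * πstar s a)
          + η k * τ k * L + KL (πstar s) (π k s))
        = η k * (∑ s, ν s * (∑ a, Qf γ c P (V (π k)) s a * πstar s a))
          + (η k * τ k * L) * (∑ s, ν s) + ∑ s, ν s * KL (πstar s) (π k s) := by
      rw [Finset.mul_sum, Finset.mul_sum, ← Finset.sum_add_distrib, ← Finset.sum_add_distrib]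
      exact Finset.sum_congr rfl fun s _ => by ring
    rw [eL, eR, hν.2, mul_one] at hsum
    exact hsum
  -- the per-iteration recursion
  have step : ∀ k,
      α k * ((∑ s, ν s * V (π (k+1)) s) - ∑ s, ν s * V πstar s)
        + α k * (1 / η k + τ k) * (∑ s, ν s * KL (πstar s) (π (k+1) s))
      ≤ α k * γ * ((∑ s, ν s * V (π k) s) - ∑ s, ν s * V πstar s)
        + (α k / η k) * (∑ s, ν s * KL (πstar s) (π k s))
        + α k * τ k * L / (1 - γ) := by
    intro k
    have core :
        η k * ((∑ s, ν s * V (π (k+1)) s) - ∑ s, ν s * V πstar s)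
          + (1 + η k * τ k) * (∑ s, ν s * KL (πstar s) (π (k+1) s))
        ≤ η k * γ * ((∑ s, ν s * V (π k) s) - ∑ s, ν s * V πstar s)
          + (∑ s, ν s * KL (πstar s) (π k s))
          + η k * τ k * L / (1 - γ) := by
      have s1 := mul_le_mul_of_nonneg_left (hR2 k) (hη k).le
      have s2 : η k * (∑ s, ν s * (∑ a, Qf γ c P (V (π k)) s a * πstar s a))
          = η k * ((1 - γ) * ((∑ s, ν s * V πstar s) - ∑ s, ν s * V (π k) s)
              + ∑ s, ν s * V (π k) s) := by rw [hstat k]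
      have hid : η k * τ k * L + η k * (γ * (τ k * L / (1 - γ)))
          = η k * τ k * L / (1 - γ) := by
        field_simp
        ring
      linarith [hI k, s1, s2, hid]
    have hC : (0:ℝ) ≤ α k / η k := (div_pos (hαpos k) (hη k)).le
    have h := mul_le_mul_of_nonneg_left core hC
    have hηne : η k ≠ 0 := (hη k).ne'
    have e1 : α k / η k * (η k * ((∑ s, ν s * V (π (k+1)) s) - ∑ s, ν s * V πstar s)
          + (1 + η k * τ k) * (∑ s, ν s * KL (πstar s) (π (k+1) s)))
        = α k * ((∑ s, ν s * V (π (k+1)) s) - ∑ s, ν s * V πstar s)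
          + α k * (1 / η k + τ k) * (∑ s, ν s * KL (πstar s) (π (k+1) s)) := by
      field_simp
    have e2 : α k / η k * (η k * γ * ((∑ s, ν s * V (π k) s) - ∑ s, ν s * V πstar s)
          + (∑ s, ν s * KL (πstar s) (π k s))
          + η k * τ k * L / (1 - γ))
        = α k * γ * ((∑ s, ν s * V (π k) s) - ∑ s, ν s * V πstar s)
          + (α k / η k) * (∑ s, ν s * KL (πstar s) (π k s))
          + α k * τ k * L / (1 - γ) := by
      field_simp
    rw [e1, e2] at h
    exact h
  -- nonnegativity facts
  have hfge : ∀ k, (∑ s, ν s * V πstar s) ≤ ∑ s, ν s * V (π k) s := by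
    intro k
    exact Finset.sum_le_sum fun s _ =>
      mul_le_mul_of_nonneg_left (hoptimal (π k) (hpol k) s) (hνpos s).le
  have hφ : ∀ k, 0 ≤ ∑ s, ν s * KL (πstar s) (π k s) := by
    intro k
    exact Finset.sum_nonneg fun s _ =>
      mul_nonneg (hνpos s).le (hKL0 k s _ (hπstar s))
  have hterm : ∀ t, 0 ≤ α t * τ t * L / (1 - γ) := fun t =>
    div_nonneg (mul_nonneg (mul_nonneg (hαpos t).le (hτ t)) hL) h1γ.le
  -- final induction
  intro k
  induction k with
  | zero =>
    have h := step 0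
    rw [Finset.sum_range_one]
    have e : 3 * α 0 * τ 0 / (1 - γ) * L = 3 * (α 0 * τ 0 * L / (1 - γ)) := by ring
    linarith [hterm 0, e]
  | succ n ih =>
    have h := step (n+1)
    have b1 : α (n+1) * γ * ((∑ s, ν s * V (π (n+1)) s) - ∑ s, ν s * V πstar s)
        ≤ α n * ((∑ s, ν s * V (π (n+1)) s) - ∑ s, ν s * V πstar s) :=
      mul_le_mul_of_nonneg_right (hα1 n) (by linarith [hfge (n+1)])
    have b2 : (α (n+1) / η (n+1)) * (∑ s, ν s * KL (πstar s) (π (n+1) s))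
        ≤ (α n * (1 / η n + τ n)) * (∑ s, ν s * KL (πstar s) (π (n+1) s)) :=
      mul_le_mul_of_nonneg_right (hα2 n) (hφ (n+1))
    rw [Finset.sum_range_succ]
    have e : 3 * α (n+1) * τ (n+1) / (1 - γ) * L
        = 3 * (α (n+1) * τ (n+1) * L / (1 - γ)) := by ring
    linarith [hterm (n+1), e, ih, h, b1, b2]
end

section
/- Run HPMD with η_k = k + k₀ and τ_k = 1/(k+k₀)², where k₀ = ⌈γ/(1−γ)⌉. Then for every k ≥ 0: f(π_{k+1}) − f(π*) ≤ (1/(k+k₀)) · ( k₀·(f(π_0) − f(π*)) + 4·log(3(k+k₀))·log|A|/(1−γ) ). -/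
set_option maxHeartbeats 1000000

section Aux
variable {A : Type*} [Fintype A]

lemma kl_term_ge (pa qa : ℝ) (hp : 0 ≤ pa) (hq : 0 < qa) :
    pa - qa ≤ pa * Real.log (pa / qa) := by
  rcases eq_or_lt_of_le hp with h | h
  · simp [← h]; linarith
  · have h1 : Real.log (qa / pa) ≤ qa / pa - 1 :=
      Real.log_le_sub_one_of_pos (by positivity)
    have h2 : Real.log (pa / qa) = - Real.log (qa / pa) := by
      rw [← Real.log_inv]; congr 1; field_simp
    rw [h2]
    have := mul_le_mul_of_nonneg_left h1 hp
    have h3 : pa * (qa / pa - 1) = qa - pa := by field_simp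
    nlinarith [h3]

lemma kl_term_gt (pa qa : ℝ) (hp : 0 ≤ pa) (hq : 0 < qa) (hne : pa ≠ qa) :
    pa - qa < pa * Real.log (pa / qa) := by
  rcases eq_or_lt_of_le hp with h | h
  · simp [← h]; have := hq; rcases eq_or_lt_of_le (le_of_lt hq) with h2 | h2 <;> linarith
  · have h1 : Real.log (qa / pa) < qa / pa - 1 := by
      apply Real.log_lt_sub_one_of_pos (by positivity)
      intro hcon
      apply hne
      field_simp at hcon
      linarith
    have h2 : Real.log (pa / qa) = - Real.log (qa / pa) := by
      rw [← Real.log_inv]; congr 1; field_simp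
    rw [h2]
    have := mul_lt_mul_of_pos_left h1 h
    have h3 : pa * (qa / pa - 1) = qa - pa := by field_simp
    nlinarith [h3]

lemma kl_nonneg (p q : A → ℝ) (hp : IsDist p) (hq1 : ∑ a, q a = 1)
    (hq : ∀ a, 0 < q a) : 0 ≤ KL p q := by
  have : ∑ a, (p a - q a) ≤ KL p q :=
    Finset.sum_le_sum (fun a _ => kl_term_ge (p a) (q a) (hp.1 a) (hq a))
  rw [Finset.sum_sub_distrib, hp.2, hq1] at this
  linarith

lemma kl_eq_zero (p q : A → ℝ) (hp : IsDist p) (hq1 : ∑ a, q a = 1)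
    (hq : ∀ a, 0 < q a) (h : KL p q ≤ 0) : p = q := by
  by_contra hne
  obtain ⟨a0, ha0⟩ := Function.ne_iff.mp hne
  have : ∑ a, (p a - q a) < KL p q := by
    apply Finset.sum_lt_sum (fun a _ => kl_term_ge (p a) (q a) (hp.1 a) (hq a))
    exact ⟨a0, Finset.mem_univ a0, kl_term_gt (p a0) (q a0) (hp.1 a0) (hq a0) ha0⟩
  rw [Finset.sum_sub_distrib, hp.2, hq1] at this
  linarith

lemma kl_self (p : A → ℝ) (hp : ∀ a, 0 < p a) : KL p p = 0 := by
  unfold KL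
  apply Finset.sum_eq_zero
  intro a _
  rw [div_self (hp a).ne', Real.log_one, mul_zero]

lemma kl_expand (p q : A → ℝ) (hp : ∀ a, 0 ≤ p a) (hq : ∀ a, 0 < q a) :
    KL p q = ∑ a, (p a * Real.log (p a) - p a * Real.log (q a)) := by
  unfold KL
  apply Finset.sum_congr rfl
  intro a _
  rcases eq_or_lt_of_le (hp a) with h | h
  · simp [← h]
  · rw [Real.log_div h.ne' (hq a).ne']; ring

lemma entropy_nonpos (p : A → ℝ) (hp : IsDist p) : ∑ a, p a * Real.log (p a) ≤ 0 := by
  apply Finset.sum_nonpos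
  intro a _
  rcases eq_or_lt_of_le (hp.1 a) with h | h
  · simp [← h]
  · have hle : p a ≤ 1 := by
      have := Finset.single_le_sum (f := p) (fun a _ => hp.1 a) (Finset.mem_univ a)
      rw [hp.2] at this; exact this
    have : Real.log (p a) ≤ 0 := Real.log_nonpos h.le hle
    exact mul_nonpos_of_nonneg_of_nonpos h.le this

lemma kl_uniform_le (p : A → ℝ) (hp : IsDist p) [Nonempty A] :
    KL p (fun _ => 1 / (Fintype.card A : ℝ)) ≤ Real.log (Fintype.card A : ℝ) := by
  have hcard : (0:ℝ) < (Fintype.card A : ℝ) := by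
    exact_mod_cast Fintype.card_pos
  rw [kl_expand p _ hp.1 (fun a => by positivity)]
  have : ∀ a ∈ Finset.univ, p a * Real.log (p a) - p a * Real.log (1 / (Fintype.card A : ℝ))
      = p a * Real.log (p a) + p a * Real.log (Fintype.card A : ℝ) := by
    intro a _
    rw [one_div, Real.log_inv]; ring
  rw [Finset.sum_congr rfl this, Finset.sum_add_distrib, ← Finset.sum_mul, hp.2, one_mul]
  have := entropy_nonpos p hp
  linarith

lemma softmax_identity [Nonempty A] (b : A → ℝ) (lam : ℝ) (hlam : 0 < lam) :
    ∃ q : A → ℝ, (∀ a, 0 < q a) ∧ (∑ a, q a = 1) ∧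
      ∀ p : A → ℝ, IsDist p →
        (∑ a, b a * p a) + lam * ∑ a, p a * Real.log (p a)
          = lam * KL p q - lam * Real.log (∑ a, Real.exp (-(b a)/lam)) := by
  set Z : ℝ := ∑ a, Real.exp (-(b a)/lam) with hZ
  have hZpos : 0 < Z := Finset.sum_pos (fun a _ => Real.exp_pos _) Finset.univ_nonempty
  refine ⟨fun a => Real.exp (-(b a)/lam) / Z, fun a => by positivity, ?_, ?_⟩
  · rw [← Finset.sum_div, ← hZ, div_self hZpos.ne']
  · intro p hp
    unfold KL
    have key : ∀ a, b a * p a + lam * (p a * Real.log (p a))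
        = lam * (p a * Real.log (p a / (Real.exp (-(b a)/lam) / Z))) - lam * Real.log Z * p a := by
      intro a
      rcases eq_or_lt_of_le (hp.1 a) with h | h
      · simp [← h]
      · have hq : (0:ℝ) < Real.exp (-(b a)/lam) / Z := by positivity
        rw [Real.log_div h.ne' hq.ne', Real.log_div (Real.exp_pos _).ne' hZpos.ne',
          Real.log_exp]
        field_simp
        ring
    calc (∑ a, b a * p a) + lam * ∑ a, p a * Real.log (p a)
        = ∑ a, (b a * p a + lam * (p a * Real.log (p a))) := by
          rw [Finset.sum_add_distrib, Finset.mul_sum]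
      _ = ∑ a, (lam * (p a * Real.log (p a / (Real.exp (-(b a)/lam) / Z))) - lam * Real.log Z * p a) := by
          exact Finset.sum_congr rfl (fun a _ => key a)
      _ = lam * (∑ a, p a * Real.log (p a / (Real.exp (-(b a)/lam) / Z))) - lam * Real.log Z := by
          rw [Finset.sum_sub_distrib, ← Finset.mul_sum, ← Finset.mul_sum, hp.2, mul_one]

lemma max_trick {S : Type*} [Fintype S] [Nonempty S] (γ ε : ℝ) (hγ0 : 0 ≤ γ) (hγ1 : γ < 1)
    (D : S → ℝ) (w : S → S → ℝ) (hw0 : ∀ s s', 0 ≤ w s s') (hw1 : ∀ s, ∑ s', w s s' = 1)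
    (h : ∀ s, D s ≤ ε + γ * ∑ s', w s s' * D s') : ∀ s, D s ≤ ε / (1-γ) := by
  obtain ⟨s₀, _, hmax⟩ := Finset.exists_max_image Finset.univ D Finset.univ_nonempty
  have hmax' : ∀ s, D s ≤ D s₀ := fun s => hmax s (Finset.mem_univ s)
  have h1 : ∑ s', w s₀ s' * D s' ≤ D s₀ := by
    calc ∑ s', w s₀ s' * D s' ≤ ∑ s', w s₀ s' * D s₀ :=
          Finset.sum_le_sum (fun s' _ => mul_le_mul_of_nonneg_left (hmax' s') (hw0 s₀ s'))
      _ = D s₀ := by rw [← Finset.sum_mul, hw1, one_mul]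
  have h2 : D s₀ ≤ ε + γ * D s₀ := le_trans (h s₀) (by nlinarith)
  have h3 : D s₀ ≤ ε / (1-γ) := by
    rw [le_div_iff₀ (by linarith)]
    nlinarith
  exact fun s => le_trans (hmax' s) h3

lemma log_sum_bound (k₀ : ℕ) (hk₀ : 1 ≤ k₀) (k : ℕ) :
    ∑ j ∈ Finset.range (k+1), 1 / ((j:ℝ) + k₀) ≤ 1 + Real.log ((k:ℝ) + k₀) := by
  induction k with
  | zero =>
    simp only [Finset.range_one, Finset.sum_singleton, Nat.cast_zero, zero_add]
    have h1 : (1:ℝ) ≤ (k₀:ℝ) := by exact_mod_cast hk₀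
    have : 1 / (k₀:ℝ) ≤ 1 := by
      rw [div_le_one (by linarith)]; exact h1
    have : 0 ≤ Real.log ((k₀:ℝ)) := Real.log_nonneg h1
    linarith [this]
  | succ n ih =>
    rw [Finset.sum_range_succ]
    have h1 : (1:ℝ) ≤ (k₀:ℝ) := by exact_mod_cast hk₀
    have hx : (0:ℝ) < (n:ℝ) + k₀ := by positivity
    have hx1 : (0:ℝ) < (n:ℝ) + 1 + k₀ := by positivity
    have key : 1 / ((n:ℝ) + 1 + k₀) ≤ Real.log ((n:ℝ)+1+k₀) - Real.log ((n:ℝ)+k₀) := by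
      rw [← Real.log_div hx1.ne' hx.ne']
      have hy : (0:ℝ) < ((n:ℝ)+k₀) / ((n:ℝ)+1+k₀) := by positivity
      have := Real.log_le_sub_one_of_pos hy
      have hlog : Real.log (((n:ℝ)+1+k₀) / ((n:ℝ)+k₀)) = - Real.log (((n:ℝ)+k₀)/((n:ℝ)+1+k₀)) := by
        rw [← Real.log_inv]; congr 1; field_simp
      rw [hlog]
      have harith : ((n:ℝ)+k₀) / ((n:ℝ)+1+k₀) - 1 = - (1 / ((n:ℝ)+1+k₀)) := by
        field_simp
        ring
      linarith [this, harith ▸ this]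
    push_cast
    push_cast at ih
    linarith

end Aux

/-- sublinear convergence of HPMD (Theorem 1): with η_k = k + k₀ and
τ_k = 1/(k+k₀)², k₀ = ⌈γ/(1−γ)⌉. -/
theorem stmt4 {S A : Type*} [Fintype S] [Nonempty S] [Fintype A] [Nonempty A]
    (γ : ℝ) (hγ : 0 < γ ∧ γ < 1)
    (c : S → A → ℝ) (P : S → A → S → ℝ) (hP : ∀ s a, IsDist (P s a))
    (V : (S → A → ℝ) → S → ℝ)
    (hV : ∀ π, IsPolicy π → ∀ s, V π s = ∑ a, π s a * Qf γ c P (V π) s a)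
    (πstar : S → A → ℝ) (hπstar : IsPolicy πstar)
    (hoptimal : ∀ π', IsPolicy π' → ∀ s, V πstar s ≤ V π' s)
    (ν : S → ℝ) (hν : IsDist ν) (hνpos : ∀ s, 0 < ν s)
    (hνstat : ∀ s', ν s' = ∑ s, ν s * ∑ a, πstar s a * P s a s')
    -- HPMD parameters: η_k = k + k₀, τ_k = 1/(k+k₀)², with k₀ = ⌈γ/(1−γ)⌉
    (k₀ : ℕ) (hk₀ : k₀ = ⌈γ / (1 - γ)⌉₊)
    (η τ : ℕ → ℝ)
    (hηdef : ∀ k, η k = (k : ℝ) + (k₀ : ℝ))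
    (hτdef : ∀ k, τ k = 1 / ((k : ℝ) + (k₀ : ℝ))^2)
    -- HPMD iterates
    (π : ℕ → S → A → ℝ) (hpol : ∀ k, IsPolicy (π k))
    (hinit : ∀ s a, π 0 s a = 1 / (Fintype.card A : ℝ))
    (hstep : ∀ k s, ∀ p : A → ℝ, IsDist p →
      η k * ((∑ a, Qf γ c P (V (π k)) s a * π (k+1) s a) + τ k * KL (π (k+1) s) (π 0 s))
          + KL (π (k+1) s) (π k s) ≤
      η k * ((∑ a, Qf γ c P (V (π k)) s a * p a) + τ k * KL p (π 0 s)) + KL p (π k s)) :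
    ∀ k : ℕ,
      (∑ s, ν s * V (π (k+1)) s) - (∑ s, ν s * V πstar s) ≤
        (1 / ((k : ℝ) + (k₀ : ℝ))) *
          ((k₀ : ℝ) * ((∑ s, ν s * V (π 0) s) - ∑ s, ν s * V πstar s)
            + 4 * Real.log (3 * ((k : ℝ) + (k₀ : ℝ))) * Real.log (Fintype.card A : ℝ)
                / (1 - γ)) := by
  obtain ⟨hγ0, hγ1⟩ := hγ
  have hγ' : (0:ℝ) < 1 - γ := by linarith
  have hcA : (0:ℝ) < (Fintype.card A : ℝ) := by exact_mod_cast Fintype.card_pos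
  have hcA1 : (1:ℝ) ≤ (Fintype.card A : ℝ) := by exact_mod_cast Fintype.card_pos
  have hlogA : 0 ≤ Real.log (Fintype.card A : ℝ) := Real.log_nonneg hcA1
  have hk₀1 : 1 ≤ k₀ := by
    rw [hk₀]
    exact Nat.one_le_iff_ne_zero.mpr (by
      intro h
      have := Nat.ceil_eq_zero.mp h
      have : γ / (1-γ) ≤ 0 := this
      have : 0 < γ / (1-γ) := div_pos hγ0 hγ'
      linarith)
  have hk₀γ : γ / (1 - γ) ≤ (k₀:ℝ) := hk₀ ▸ Nat.le_ceil _
  have hk₀R : (1:ℝ) ≤ (k₀:ℝ) := by exact_mod_cast hk₀1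
  have hηpos : ∀ k : ℕ, 0 < η k := by
    intro k; rw [hηdef]
    have : (0:ℝ) ≤ (k:ℝ) := Nat.cast_nonneg k
    linarith
  have hτpos : ∀ k : ℕ, 0 < τ k := by
    intro k; rw [hτdef]
    have : (0:ℝ) ≤ (k:ℝ) := Nat.cast_nonneg k
    positivity
  have hπ0unif : ∀ s : S, π 0 s = fun _ => 1 / (Fintype.card A : ℝ) :=
    fun s => funext (hinit s)
  have hpos0 : ∀ s a, 0 < π 0 s a := by
    intro s a; rw [hinit]; positivity
  have heta : ∀ k : ℕ, η k * τ k = 1/((k:ℝ)+(k₀:ℝ)) := by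
    intro k
    rw [hηdef, hτdef]
    have h0 : (0:ℝ) < (k:ℝ)+(k₀:ℝ) := by
      have : (0:ℝ) ≤ (k:ℝ) := Nat.cast_nonneg k
      linarith
    field_simp
  -- per-step characterization
  have step_main : ∀ (k : ℕ) (s : S), (∀ a, 0 < π k s a) →
      (∀ a, 0 < π (k+1) s a) ∧
      (∀ p : A → ℝ, IsDist p →
        η k * ((∑ a, Qf γ c P (V (π k)) s a * π (k+1) s a) + τ k * KL (π (k+1) s) (π 0 s))
            + KL (π (k+1) s) (π k s) + (1 + η k * τ k) * KL p (π (k+1) s)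
          = η k * ((∑ a, Qf γ c P (V (π k)) s a * p a) + τ k * KL p (π 0 s)) + KL p (π k s)) := by
    intro k s hks
    have hlam : 0 < 1 + η k * τ k := by
      have := mul_pos (hηpos k) (hτpos k); linarith
    set b : A → ℝ := fun a => η k * Qf γ c P (V (π k)) s a
        - η k * τ k * Real.log (π 0 s a) - Real.log (π k s a) with hbdef
    have hφ : ∀ p : A → ℝ, IsDist p →
        η k * ((∑ a, Qf γ c P (V (π k)) s a * p a) + τ k * KL p (π 0 s)) + KL p (π k s)
          = (∑ a, b a * p a) + (1 + η k * τ k) * ∑ a, p a * Real.log (p a) := by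
      intro p hp
      rw [kl_expand p (π 0 s) hp.1 (hpos0 s), kl_expand p (π k s) hp.1 hks]
      simp only [hbdef, mul_add, Finset.mul_sum]
      rw [← Finset.sum_add_distrib, ← Finset.sum_add_distrib, ← Finset.sum_add_distrib]
      apply Finset.sum_congr rfl
      intro a _
      ring
    obtain ⟨q, hqpos, hqsum, hqid⟩ := softmax_identity b (1 + η k * τ k) hlam
    have hq_dist : IsDist q := ⟨fun a => (hqpos a).le, hqsum⟩
    have h1 := hstep k s q hq_dist
    rw [hφ _ (hpol (k+1) s), hφ _ hq_dist, hqid _ (hpol (k+1) s), hqid _ hq_dist,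
      kl_self q hqpos] at h1
    have hKLle : KL (π (k+1) s) q ≤ 0 := by nlinarith [h1, hlam]
    have heq : π (k+1) s = q := kl_eq_zero _ q (hpol (k+1) s) hqsum hqpos hKLle
    refine ⟨fun a => heq ▸ hqpos a, ?_⟩
    intro p hp
    have e1 := hφ p hp
    have e2 := hqid p hp
    have e3 := hφ (π (k+1) s) (hpol (k+1) s)
    have e4 := hqid (π (k+1) s) (hpol (k+1) s)
    have e5 : KL (π (k+1) s) q = 0 := by rw [heq]; exact kl_self q hqpos
    rw [e3, e4, e5, e1, e2, heq]
    ring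
  have hpos : ∀ k s a, 0 < π k s a := by
    intro k
    induction k with
    | zero => exact hpos0
    | succ n ih => intro s; exact (step_main n s (ih s)).1
  have tp : ∀ (k : ℕ) (s : S), ∀ p : A → ℝ, IsDist p →
      η k * ((∑ a, Qf γ c P (V (π k)) s a * π (k+1) s a) + τ k * KL (π (k+1) s) (π 0 s))
          + KL (π (k+1) s) (π k s) + (1 + η k * τ k) * KL p (π (k+1) s)
        = η k * ((∑ a, Qf γ c P (V (π k)) s a * p a) + τ k * KL p (π 0 s)) + KL p (π k s) :=
    fun k s => (step_main k s (hpos k s)).2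
  -- basic MDP identities
  have hQV : ∀ (k : ℕ) (s : S), ∑ a, Qf γ c P (V (π k)) s a * π k s a = V (π k) s := by
    intro k s
    rw [hV (π k) (hpol k) s]
    exact Finset.sum_congr rfl (fun a _ => mul_comm _ _)
  have hM3 : ∀ (k : ℕ) (s : S), ∑ a, Qf γ c P (V (π k)) s a * π (k+1) s a
      ≤ V (π k) s + τ k * Real.log (Fintype.card A : ℝ) := by
    intro k s
    have h1 := hstep k s (π k s) (hpol k s)
    rw [kl_self (π k s) (hpos k s), hQV k s] at h1
    have h2 : KL (π k s) (π 0 s) ≤ Real.log (Fintype.card A : ℝ) := by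
      rw [hπ0unif s]; exact kl_uniform_le _ (hpol k s)
    have h3 : 0 ≤ KL (π (k+1) s) (π 0 s) :=
      kl_nonneg _ _ (hpol (k+1) s) (hpol 0 s).2 (hpos 0 s)
    have h4 : 0 ≤ KL (π (k+1) s) (π k s) :=
      kl_nonneg _ _ (hpol (k+1) s) (hpol k s).2 (hpos k s)
    have hη := hηpos k
    have hτ := hτpos k
    have key : η k * (∑ a, Qf γ c P (V (π k)) s a * π (k+1) s a)
        ≤ η k * (V (π k) s + τ k * Real.log (Fintype.card A : ℝ)) := by
      nlinarith [h1, mul_le_mul_of_nonneg_left h2 (mul_nonneg hη.le hτ.le),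
        mul_nonneg (mul_nonneg hη.le hτ.le) h3, h4]
    exact le_of_mul_le_mul_left key hη
  -- Bellman expansion
  have hswap : ∀ (g : S → A → ℝ) (s : S) (F : S → ℝ),
      ∑ a, g s a * ∑ s', P s a s' * F s' = ∑ s', (∑ a, g s a * P s a s') * F s' := by
    intro g s F
    simp only [Finset.mul_sum]
    rw [Finset.sum_comm]
    apply Finset.sum_congr rfl
    intro s' _
    rw [Finset.sum_mul]
    apply Finset.sum_congr rfl
    intro a _
    ring
  have hw : ∀ (k : ℕ) (s : S), ∑ s', (∑ a, π k s a * P s a s') = 1 := by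
    intro k s
    rw [Finset.sum_comm]
    have : ∀ a ∈ Finset.univ, ∑ s', π k s a * P s a s' = π k s a := by
      intro a _
      rw [← Finset.mul_sum, (hP s a).2, mul_one]
    rw [Finset.sum_congr rfl this, (hpol k s).2]
  have hBell : ∀ (k : ℕ) (s : S), V (π (k+1)) s
      = (∑ a, Qf γ c P (V (π k)) s a * π (k+1) s a)
        + γ * ∑ a, π (k+1) s a * ∑ s', P s a s' * (V (π (k+1)) s' - V (π k) s') := by
    intro k s
    rw [hV (π (k+1)) (hpol (k+1)) s]
    unfold Qf
    rw [Finset.mul_sum, ← Finset.sum_add_distrib]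
    apply Finset.sum_congr rfl
    intro a _
    have hd : ∑ s', P s a s' * (V (π (k+1)) s' - V (π k) s')
        = (∑ s', P s a s' * V (π (k+1)) s') - ∑ s', P s a s' * V (π k) s' := by
      rw [← Finset.sum_sub_distrib]
      exact Finset.sum_congr rfl (fun s' _ => by ring)
    rw [hd]
    ring
  have hMono : ∀ (k : ℕ) (s : S), V (π (k+1)) s - V (π k) s
      ≤ (τ k * Real.log (Fintype.card A : ℝ)) / (1-γ) := by
    intro k
    have hw0 : ∀ s s', 0 ≤ ∑ a, π (k+1) s a * P s a s' :=
      fun s s' => Finset.sum_nonneg fun a _ => mul_nonneg ((hpol (k+1) s).1 a) ((hP s a).1 s')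
    have hineq : ∀ s, V (π (k+1)) s - V (π k) s
        ≤ τ k * Real.log (Fintype.card A : ℝ)
          + γ * ∑ s', (∑ a, π (k+1) s a * P s a s') * (V (π (k+1)) s' - V (π k) s') := by
      intro s
      have h1 := hBell k s
      rw [hswap (π (k+1)) s (fun s' => V (π (k+1)) s' - V (π k) s')] at h1
      have h2 := hM3 k s
      linarith
    exact max_trick γ _ hγ0.le hγ1 _ _ hw0 (hw (k+1)) hineq
  have hM5 : ∀ (k : ℕ) (s : S),
      V (π (k+1)) s - γ * ((τ k * Real.log (Fintype.card A : ℝ))/(1-γ))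
        ≤ ∑ a, Qf γ c P (V (π k)) s a * π (k+1) s a := by
    intro k s
    have h1 := hBell k s
    rw [hswap (π (k+1)) s (fun s' => V (π (k+1)) s' - V (π k) s')] at h1
    have h2 : ∑ s', (∑ a, π (k+1) s a * P s a s') * (V (π (k+1)) s' - V (π k) s')
        ≤ (τ k * Real.log (Fintype.card A : ℝ))/(1-γ) := by
      calc ∑ s', (∑ a, π (k+1) s a * P s a s') * (V (π (k+1)) s' - V (π k) s')
          ≤ ∑ s', (∑ a, π (k+1) s a * P s a s')
              * ((τ k * Real.log (Fintype.card A : ℝ))/(1-γ)) := by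
            apply Finset.sum_le_sum
            intro s' _
            exact mul_le_mul_of_nonneg_left (hMono k s')
              (Finset.sum_nonneg fun a _ => mul_nonneg ((hpol (k+1) s).1 a) ((hP s a).1 s'))
        _ = (τ k * Real.log (Fintype.card A : ℝ))/(1-γ) := by
            rw [← Finset.sum_mul, hw (k+1) s, one_mul]
    have h3 := mul_le_mul_of_nonneg_left h2 hγ0.le
    linarith
  -- performance difference at π*
  have hswap2 : ∀ F : S → ℝ,
      ∑ s, ν s * ∑ a, πstar s a * ∑ s', P s a s' * F s' = ∑ s', ν s' * F s' := by
    intro F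
    calc ∑ s, ν s * ∑ a, πstar s a * ∑ s', P s a s' * F s'
        = ∑ s, ∑ s', ν s * ((∑ a, πstar s a * P s a s') * F s') := by
          apply Finset.sum_congr rfl
          intro s _
          rw [hswap πstar s F, Finset.mul_sum]
      _ = ∑ s', ∑ s, ν s * ((∑ a, πstar s a * P s a s') * F s') := Finset.sum_comm
      _ = ∑ s', (∑ s, ν s * (∑ a, πstar s a * P s a s')) * F s' := by
          apply Finset.sum_congr rfl
          intro s' _
          rw [Finset.sum_mul]
          apply Finset.sum_congr rfl
          intro s _
          ring
      _ = ∑ s', ν s' * F s' := by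
          apply Finset.sum_congr rfl
          intro s' _
          congr 1
          exact (hνstat s').symm
  have hPDL : ∀ k : ℕ, ∑ s, ν s * (∑ a, Qf γ c P (V (π k)) s a * πstar s a)
      = (1-γ) * (∑ s, ν s * V πstar s) + γ * (∑ s, ν s * V (π k) s) := by
    intro k
    have hstar : ∀ s, ∑ a, Qf γ c P (V (π k)) s a * πstar s a
        = V πstar s + γ * ∑ a, πstar s a * ∑ s', P s a s' * (V (π k) s' - V πstar s') := by
      intro s
      rw [hV πstar hπstar s]
      unfold Qf
      rw [Finset.mul_sum, ← Finset.sum_add_distrib]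
      apply Finset.sum_congr rfl
      intro a _
      have hd : ∑ s', P s a s' * (V (π k) s' - V πstar s')
          = (∑ s', P s a s' * V (π k) s') - ∑ s', P s a s' * V πstar s' := by
        rw [← Finset.sum_sub_distrib]
        exact Finset.sum_congr rfl (fun s' _ => by ring)
      rw [hd]
      ring
    calc ∑ s, ν s * (∑ a, Qf γ c P (V (π k)) s a * πstar s a)
        = ∑ s, (ν s * V πstar s
            + γ * (ν s * ∑ a, πstar s a * ∑ s', P s a s' * (V (π k) s' - V πstar s'))) := by
          apply Finset.sum_congr rfl
          intro s _
          rw [hstar s]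
          ring
      _ = (∑ s, ν s * V πstar s)
          + γ * ∑ s, ν s * ∑ a, πstar s a * ∑ s', P s a s' * (V (π k) s' - V πstar s') := by
          rw [Finset.sum_add_distrib, ← Finset.mul_sum]
      _ = (∑ s, ν s * V πstar s) + γ * ∑ s', ν s' * (V (π k) s' - V πstar s') := by
          rw [hswap2 (fun s' => V (π k) s' - V πstar s')]
      _ = (1-γ) * (∑ s, ν s * V πstar s) + γ * (∑ s, ν s * V (π k) s) := by
          have : ∑ s', ν s' * (V (π k) s' - V πstar s')
              = (∑ s, ν s * V (π k) s) - ∑ s, ν s * V πstar s := by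
            rw [← Finset.sum_sub_distrib]
            exact Finset.sum_congr rfl (fun s' _ => by ring)
          rw [this]
          ring
  -- nonnegativity facts
  have hδ : ∀ k : ℕ, 0 ≤ (∑ s, ν s * V (π k) s) - ∑ s, ν s * V πstar s := by
    intro k
    have : ∑ s, ν s * V πstar s ≤ ∑ s, ν s * V (π k) s :=
      Finset.sum_le_sum fun s _ =>
        mul_le_mul_of_nonneg_left (hoptimal (π k) (hpol k) s) (hνpos s).le
    linarith
  have hD : ∀ k : ℕ, 0 ≤ ∑ s, ν s * KL (πstar s) (π k s) := by
    intro k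
    apply Finset.sum_nonneg
    intro s _
    exact mul_nonneg (hνpos s).le (kl_nonneg _ _ (hπstar s) (hpol k s).2 (hpos k s))
  have hD0 : ∑ s, ν s * KL (πstar s) (π 0 s) ≤ Real.log (Fintype.card A : ℝ) := by
    calc ∑ s, ν s * KL (πstar s) (π 0 s)
        ≤ ∑ s, ν s * Real.log (Fintype.card A : ℝ) := by
          apply Finset.sum_le_sum
          intro s _
          apply mul_le_mul_of_nonneg_left _ (hνpos s).le
          rw [hπ0unif s]
          exact kl_uniform_le _ (hπstar s)
      _ = Real.log (Fintype.card A : ℝ) := by rw [← Finset.sum_mul, hν.2, one_mul]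
  -- main one-step recursion
  have hR : ∀ k : ℕ,
      η k * ((∑ s, ν s * V (π (k+1)) s) - ∑ s, ν s * V πstar s)
        + (∑ s, ν s * KL (πstar s) (π (k+1) s))
      ≤ γ * η k * ((∑ s, ν s * V (π k) s) - ∑ s, ν s * V πstar s)
        + (∑ s, ν s * KL (πstar s) (π k s))
        + (η k * τ k) * (Real.log (Fintype.card A : ℝ) / (1-γ)) := by
    intro k
    have hη := hηpos k
    have hτ := hτpos k
    have hps : ∀ s, η k * V (π (k+1)) s + KL (πstar s) (π (k+1) s)
        ≤ η k * (∑ a, Qf γ c P (V (π k)) s a * πstar s a) + KL (πstar s) (π k s)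
          + η k * τ k * Real.log (Fintype.card A : ℝ)
          + η k * (γ * ((τ k * Real.log (Fintype.card A : ℝ))/(1-γ))) := by
      intro s
      have t := tp k s (πstar s) (hπstar s)
      have b1 : 0 ≤ KL (π (k+1) s) (π 0 s) :=
        kl_nonneg _ _ (hpol (k+1) s) (hpol 0 s).2 (hpos 0 s)
      have b2 : 0 ≤ KL (π (k+1) s) (π k s) :=
        kl_nonneg _ _ (hpol (k+1) s) (hpol k s).2 (hpos k s)
      have b3 : 0 ≤ KL (πstar s) (π (k+1) s) :=
        kl_nonneg _ _ (hπstar s) (hpol (k+1) s).2 (hpos (k+1) s)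
      have b4 : KL (πstar s) (π 0 s) ≤ Real.log (Fintype.card A : ℝ) := by
        rw [hπ0unif s]
        exact kl_uniform_le _ (hπstar s)
      have b5 := hM5 k s
      nlinarith [t, mul_le_mul_of_nonneg_left b5 hη.le,
        mul_le_mul_of_nonneg_left b4 (mul_nonneg hη.le hτ.le),
        mul_nonneg (mul_nonneg hη.le hτ.le) b1, b2,
        mul_nonneg (mul_nonneg hη.le hτ.le) b3]
    have hsum : ∑ s, ν s * (η k * V (π (k+1)) s + KL (πstar s) (π (k+1) s))
        ≤ ∑ s, ν s * (η k * (∑ a, Qf γ c P (V (π k)) s a * πstar s a) + KL (πstar s) (π k s)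
          + η k * τ k * Real.log (Fintype.card A : ℝ)
          + η k * (γ * ((τ k * Real.log (Fintype.card A : ℝ))/(1-γ)))) :=
      Finset.sum_le_sum (fun s _ => mul_le_mul_of_nonneg_left (hps s) (hνpos s).le)
    have lhs_eq : ∑ s, ν s * (η k * V (π (k+1)) s + KL (πstar s) (π (k+1) s))
        = η k * (∑ s, ν s * V (π (k+1)) s) + ∑ s, ν s * KL (πstar s) (π (k+1) s) := by
      rw [Finset.mul_sum, ← Finset.sum_add_distrib]
      apply Finset.sum_congr rfl
      intro s _
      ring
    have rhs_eq : ∑ s, ν s * (η k * (∑ a, Qf γ c P (V (π k)) s a * πstar s a)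
          + KL (πstar s) (π k s)
          + η k * τ k * Real.log (Fintype.card A : ℝ)
          + η k * (γ * ((τ k * Real.log (Fintype.card A : ℝ))/(1-γ))))
        = η k * (∑ s, ν s * (∑ a, Qf γ c P (V (π k)) s a * πstar s a))
          + (∑ s, ν s * KL (πstar s) (π k s))
          + η k * τ k * Real.log (Fintype.card A : ℝ)
          + η k * (γ * ((τ k * Real.log (Fintype.card A : ℝ))/(1-γ))) := by
      have expand : ∀ s ∈ Finset.univ,
          ν s * (η k * (∑ a, Qf γ c P (V (π k)) s a * πstar s a)
            + KL (πstar s) (π k s)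
            + η k * τ k * Real.log (Fintype.card A : ℝ)
            + η k * (γ * ((τ k * Real.log (Fintype.card A : ℝ))/(1-γ))))
          = η k * (ν s * (∑ a, Qf γ c P (V (π k)) s a * πstar s a))
            + ν s * KL (πstar s) (π k s)
            + (η k * τ k * Real.log (Fintype.card A : ℝ)) * ν s
            + (η k * (γ * ((τ k * Real.log (Fintype.card A : ℝ))/(1-γ)))) * ν s := by
        intro s _
        ring
      rw [Finset.sum_congr rfl expand]
      rw [Finset.sum_add_distrib, Finset.sum_add_distrib, Finset.sum_add_distrib,
        ← Finset.mul_sum, ← Finset.mul_sum, ← Finset.mul_sum, hν.2]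
      ring
    rw [lhs_eq, rhs_eq, hPDL k] at hsum
    have hfield : η k * τ k * Real.log (Fintype.card A : ℝ)
        + η k * (γ * ((τ k * Real.log (Fintype.card A : ℝ))/(1-γ)))
        = (η k * τ k) * (Real.log (Fintype.card A : ℝ) / (1-γ)) := by
      field_simp
      ring
    nlinarith [hsum, hfield]
  -- telescoped bound by induction
  have hKey : ∀ k : ℕ,
      η k * ((∑ s, ν s * V (π (k+1)) s) - ∑ s, ν s * V πstar s)
        + (∑ s, ν s * KL (πstar s) (π (k+1) s))
      ≤ (k₀:ℝ) * ((∑ s, ν s * V (π 0) s) - ∑ s, ν s * V πstar s)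
        + (∑ s, ν s * KL (πstar s) (π 0 s))
        + (Real.log (Fintype.card A : ℝ) / (1-γ)) * ∑ j ∈ Finset.range (k+1), 1/((j:ℝ)+(k₀:ℝ)) := by
    intro k
    induction k with
    | zero =>
      have h := hR 0
      rw [heta 0] at h
      have hγη : γ * η 0 * ((∑ s, ν s * V (π 0) s) - ∑ s, ν s * V πstar s)
          ≤ (k₀:ℝ) * ((∑ s, ν s * V (π 0) s) - ∑ s, ν s * V πstar s) := by
        have h1 : γ * η 0 ≤ (k₀:ℝ) := by
          rw [hηdef 0]
          push_cast
          nlinarith [hk₀R]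
        exact mul_le_mul_of_nonneg_right h1 (hδ 0)
      rw [Finset.sum_range_one]
      push_cast
      push_cast at h
      linarith
    | succ n ih =>
      have h := hR (n+1)
      rw [heta (n+1)] at h
      have hγη : γ * η (n+1) ≤ η n := by
        rw [hηdef, hηdef]
        push_cast
        have h1 : γ ≤ (k₀:ℝ) * (1-γ) := by
          have := (div_le_iff₀ hγ').mp hk₀γ
          linarith
        have h2 : (0:ℝ) ≤ (n:ℝ) := Nat.cast_nonneg n
        nlinarith [mul_nonneg hγ'.le h2]
      have h2 : γ * η (n+1) * ((∑ s, ν s * V (π (n+1)) s) - ∑ s, ν s * V πstar s)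
          ≤ η n * ((∑ s, ν s * V (π (n+1)) s) - ∑ s, ν s * V πstar s) :=
        mul_le_mul_of_nonneg_right hγη (hδ (n+1))
      rw [Finset.sum_range_succ]
      push_cast
      push_cast at h ih
      linarith
  -- finish
  intro k
  have hkey := hKey k
  have hηk : η k = (k:ℝ) + (k₀:ℝ) := hηdef k
  have hxk : (1:ℝ) ≤ (k:ℝ) + (k₀:ℝ) := by
    have : (0:ℝ) ≤ (k:ℝ) := Nat.cast_nonneg k
    linarith
  have hxkpos : (0:ℝ) < (k:ℝ) + (k₀:ℝ) := by linarith
  have hsumb := log_sum_bound k₀ hk₀1 k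
  have hL : 0 ≤ Real.log (Fintype.card A : ℝ) / (1-γ) := div_nonneg hlogA hγ'.le
  have hlogx : 0 ≤ Real.log ((k:ℝ)+(k₀:ℝ)) := Real.log_nonneg hxk
  have hlog3 : (1:ℝ) ≤ Real.log 3 := by
    rw [Real.le_log_iff_exp_le (by norm_num)]
    have := Real.exp_one_lt_d9
    linarith
  have hlog3x : Real.log (3*((k:ℝ)+(k₀:ℝ)))
      = Real.log 3 + Real.log ((k:ℝ)+(k₀:ℝ)) :=
    Real.log_mul (by norm_num) (by linarith)
  have hDbd : ∑ s, ν s * KL (πstar s) (π 0 s) ≤ Real.log (Fintype.card A : ℝ) / (1-γ) := by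
    have : Real.log (Fintype.card A : ℝ) ≤ Real.log (Fintype.card A : ℝ) / (1-γ) := by
      rw [le_div_iff₀ hγ']
      nlinarith [hlogA]
    linarith [hD0]
  have hsum2 : (Real.log (Fintype.card A : ℝ) / (1-γ))
        * ∑ j ∈ Finset.range (k+1), 1/((j:ℝ)+(k₀:ℝ))
      ≤ (Real.log (Fintype.card A : ℝ) / (1-γ)) * (1 + Real.log ((k:ℝ)+(k₀:ℝ))) :=
    mul_le_mul_of_nonneg_left hsumb hL
  have hmagic : Real.log (Fintype.card A : ℝ) / (1-γ)
        + (Real.log (Fintype.card A : ℝ) / (1-γ)) * (1 + Real.log ((k:ℝ)+(k₀:ℝ)))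
      ≤ 4 * Real.log (3*((k:ℝ)+(k₀:ℝ))) * Real.log (Fintype.card A : ℝ) / (1-γ) := by
    have expand : 4 * Real.log (3*((k:ℝ)+(k₀:ℝ))) * Real.log (Fintype.card A : ℝ) / (1-γ)
        = (Real.log (Fintype.card A : ℝ) / (1-γ)) * (4 * Real.log (3*((k:ℝ)+(k₀:ℝ)))) := by
      ring
    rw [expand, hlog3x]
    have key : (2:ℝ) + Real.log ((k:ℝ)+(k₀:ℝ)) ≤ 4 * (Real.log 3 + Real.log ((k:ℝ)+(k₀:ℝ))) := by
      nlinarith [hlog3, hlogx]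
    nlinarith [mul_le_mul_of_nonneg_left key hL]
  have main : ((k:ℝ)+(k₀:ℝ)) * ((∑ s, ν s * V (π (k+1)) s) - ∑ s, ν s * V πstar s)
      ≤ (k₀:ℝ) * ((∑ s, ν s * V (π 0) s) - ∑ s, ν s * V πstar s)
        + 4 * Real.log (3*((k:ℝ)+(k₀:ℝ))) * Real.log (Fintype.card A : ℝ) / (1-γ) := by
    rw [hηk] at hkey
    have hDk1 := hD (k+1)
    linarith [hkey, hDbd, hsum2, hmagic]
  rw [one_div, inv_mul_eq_div, le_div_iff₀ hxkpos]
  linarith [main]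
end

section
/- Let A be a finite set, A' ⊆ A a nonempty subset, π a probability distribution on A that is strictly positive on A', and let ε > 0 and ρ ≥ 1. Suppose Σ_{a∈A'} π(a) ≥ 1 − ε and π(i)/π(j) ≤ ρ for all i, j ∈ A'. If |A'| > 1, then (1−ε)/|A'| − (ρ−1) ≤ π(i) ≤ 1/|A'| + (ρ−1) for every i ∈ A'; if moreover ρ ≤ 1 + (1 − 1/|A'|)·ε, then |π(i) − 1/|A'|| ≤ ε for every i ∈ A'. If |A'| = 1, then |π(i) − 1/|A'|| ≤ ε holds for every i ∈ A' and every ρ ≥ 1. -/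
/-- bounds on near-uniform probabilities (Lemma 5). -/
theorem stmt12 {A : Type*} [Fintype A]
    (A' : Finset A) (hA' : A'.Nonempty)
    (π : A → ℝ) (hπ : IsDist π) (hpos : ∀ a ∈ A', 0 < π a)
    (ε ρ : ℝ) (hε : 0 < ε) (hρ : 1 ≤ ρ)
    (hsum : 1 - ε ≤ ∑ a ∈ A', π a)
    (hratio : ∀ i ∈ A', ∀ j ∈ A', π i / π j ≤ ρ) :
    (1 < A'.card →
      (∀ i ∈ A',
        (1 - ε) / (A'.card : ℝ) - (ρ - 1) ≤ π i ∧ π i ≤ 1 / (A'.card : ℝ) + (ρ - 1)) ∧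
      (ρ ≤ 1 + (1 - 1 / (A'.card : ℝ)) * ε →
        ∀ i ∈ A', |π i - 1 / (A'.card : ℝ)| ≤ ε)) ∧
    (A'.card = 1 → ∀ i ∈ A', |π i - 1 / (A'.card : ℝ)| ≤ ε) := by
  set n : ℝ := (A'.card : ℝ) with hn
  have hS1 : ∑ a ∈ A', π a ≤ 1 := by
    rw [← hπ.2]
    exact Finset.sum_le_sum_of_subset_of_nonneg (Finset.subset_univ _)
      (fun a _ _ => hπ.1 a)
  have hπile : ∀ i ∈ A', π i ≤ 1 := fun i hi =>
    (Finset.single_le_sum (fun a _ => hπ.1 a) hi).trans hS1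
  have hmul : ∀ i ∈ A', ∀ j ∈ A', π i ≤ ρ * π j := by
    intro i hi j hj
    have := hratio i hi j hj
    rwa [div_le_iff₀ (hpos j hj)] at this
  have hub : ∀ i ∈ A', n * π i ≤ ρ := by
    intro i hi
    have : ∑ _j ∈ A', π i ≤ ∑ j ∈ A', ρ * π j :=
      Finset.sum_le_sum (fun j hj => hmul i hi j hj)
    rw [Finset.sum_const, ← Finset.mul_sum, nsmul_eq_mul] at this
    have h2 : ρ * ∑ j ∈ A', π j ≤ ρ * 1 :=
      mul_le_mul_of_nonneg_left hS1 (by linarith)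
    calc n * π i ≤ ρ * ∑ j ∈ A', π j := this
      _ ≤ ρ := by linarith
  have hlb : ∀ i ∈ A', 1 - ε ≤ ρ * (n * π i) := by
    intro i hi
    have : ∑ j ∈ A', π j ≤ ∑ _j ∈ A', ρ * π i :=
      Finset.sum_le_sum (fun j hj => hmul j hj i hi)
    rw [Finset.sum_const, nsmul_eq_mul] at this
    calc 1 - ε ≤ ∑ j ∈ A', π j := hsum
      _ ≤ n * (ρ * π i) := this
      _ = ρ * (n * π i) := by ring
  refine ⟨fun hcard => ?_, fun hcard => ?_⟩
  · have hn2 : (2 : ℝ) ≤ n := by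
      have h2c : 2 ≤ A'.card := hcard
      rw [hn]; exact_mod_cast h2c
    have hn0 : (0 : ℝ) < n := by linarith
    constructor
    · intro i hi
      have h1 := hub i hi
      have h2 := hlb i hi
      have hπi := hpos i hi
      have hle1 := hπile i hi
      constructor
      · rw [sub_le_iff_le_add, div_le_iff₀ hn0]
        nlinarith [mul_nonneg (sub_nonneg.2 hρ) (by nlinarith : (0:ℝ) ≤ n - n * π i)]
      · rw [← sub_le_iff_le_add, le_div_iff₀ hn0]
        nlinarith [mul_nonneg (sub_nonneg.2 hρ) (by linarith : (0:ℝ) ≤ n - 1)]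
    · intro hρε i hi
      have h1 := hub i hi
      have h2 := hlb i hi
      have hπi := hpos i hi
      have hle1 := hπile i hi
      have hρε' : ρ * n ≤ n + (n - 1) * ε := by
        have h := mul_le_mul_of_nonneg_right hρε (le_of_lt hn0)
        have hnn : (1 / n) * n = 1 := one_div_mul_cancel (ne_of_gt hn0)
        nlinarith [h, hnn]
      rw [abs_le]
      constructor
      · have key : 1 / n ≤ π i + ε := by
          rw [div_le_iff₀ hn0]
          nlinarith [mul_le_mul_of_nonneg_right hρε' hπi.le,
            mul_nonneg (mul_nonneg (by linarith : (0:ℝ) ≤ n - 1) hε.le)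
              (by linarith : (0:ℝ) ≤ 1 - π i)]
        linarith
      · have key : π i - ε ≤ 1 / n := by
          rw [le_div_iff₀ hn0]
          nlinarith [mul_le_mul_of_nonneg_left h1 hn0.le, hρε', hn0,
            mul_nonneg (mul_nonneg hn0.le hε.le) (by linarith : (0:ℝ) ≤ n - 1)]
        linarith
  · intro i hi
    have hn1 : n = 1 := by rw [hn]; exact_mod_cast hcard
    have hA'eq : A' = {i} :=
      Finset.eq_singleton_iff_unique_mem.mpr
        ⟨hi, fun j hj => Finset.card_le_one.mp (le_of_eq hcard) j hj i hi⟩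
    have hsum' : ∑ a ∈ A', π a = π i := by rw [hA'eq, Finset.sum_singleton]
    have hle1 := hπile i hi
    rw [hn1, abs_le]
    constructor
    · linarith [hsum.trans_eq hsum']
    · norm_num
      linarith
end
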